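/- arXiv:1802.06546 — 3 statements merged into one kernel-verified Lean document; each statement's English description precedes it below -/
import Mathlib

section
/- Let m1, m2 be positive integers with m2 even. For every function f : I(m) → ℂ there exists a unique function P in the span of {X_γ : γ ∈ Γ(m)} such that P(i1π/m1, i2π/m2) = f(i) for all i = (i1,i2) ∈ I(m). -/
/-!
Let `L` be the checkerboard `{p ∈ [0, 2m₁) × [0, 2m₂) : p₁ + p₂ even}` and
`E_{a,b}(p) = exp(πi (a p₁ / m₁ + b p₂ / m₂))`. Then `∑_{p ∈ L} E_{a,b}(p)` is `2 m₁ m₂` when `(a, b)`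
lies in the lattice spanned by `(2m₁, 0)`, `(0, 2m₂)`, `(m₁, m₂)` and `0` otherwise. On `L`,
`X_γ = (E_{γ₁,γ₂} + (-1)^{γ₂} E_{-γ₁,γ₂}) / 2`, and the shape of `Γ(m)` (including the removed edge)
puts `(γ₁, γ₂)` and `(±γ'₁, γ'₂)` in distinct cosets of that lattice whenever `γ ≠ γ'`, so `(E_{-γ})`
and `(X_γ)` are biorthogonal on `L`. The symmetries `(θ, φ) ↦ (-θ, φ + π)` and `2π`-periodicity
of `X_γ` fold `L` onto `I(m)` (this needs `m₂` even), so the `X_γ` are already linearly independent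
on `I(m)`.
Finally `|Γ(m)| = |I(m)| = m₁ m₂`, so the square interpolation system is invertible.
-/

open Real Complex

/-- The index set I(m) as a finset. -/
def indexSet (m1 m2 : ℕ) : Finset (ℕ × ℕ) :=
  (Finset.range (m1 + 1) ×ˢ Finset.range (2 * m2)).filter
    (fun i => ((i.1 = 0 ∨ i.1 = m1) → i.2 < m2) ∧ Even (i.1 + i.2))

/-- The spectral index set Γ(m), with denominators cleared. -/
noncomputable def GammaSet (m1 m2 : ℕ) : Finset (ℤ × ℤ) :=
  ((Finset.Icc (0 : ℤ) m1) ×ˢ (Finset.Icc (-(m2 : ℤ)) m2)).filter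
    (fun γ => ((1 ≤ γ.1 ∧ (m2 : ℤ) * γ.1 + (m1 : ℤ) * |γ.2| ≤ m1 * m2) ∨
        (γ.1 = 0 ∧ Even γ.2 ∧ |γ.2| < (m2 : ℤ))) ∧
      ¬((m2 : ℤ) * γ.1 + (m1 : ℤ) * γ.2 = m1 * m2 ∧ γ.2 ≠ 0))

/-- The parity-modified double Fourier basis functions X_γ. -/
noncomputable def Xbasis (γ : ℤ × ℤ) (θ φ : ℝ) : ℂ :=
  if Even γ.2 then
    (Real.cos (γ.1 * θ) : ℂ) * Complex.exp (Complex.I * γ.2 * φ)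
  else
    Complex.I * (Real.sin (γ.1 * θ) : ℂ) * Complex.exp (Complex.I * γ.2 * φ)

open Finset

theorem eq_zero_of_biorthogonal {α P R : Type*} [CommRing R] [NoZeroDivisors R]
    (s : Finset α) (L : Finset P) (φ ψ : α → P → R)
    (horth : ∀ a ∈ s, ∀ b ∈ s, a ≠ b → ∑ p ∈ L, ψ a p * φ b p = 0)
    (hdiag : ∀ a ∈ s, ∑ p ∈ L, ψ a p * φ a p ≠ 0)
    (c : α → R) (hc : ∀ p ∈ L, ∑ b ∈ s, c b * φ b p = 0) :
    ∀ a ∈ s, c a = 0 := by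
  intro a ha
  have h : ∑ p ∈ L, ψ a p * ∑ b ∈ s, c b * φ b p =
      ∑ b ∈ s, c b * ∑ p ∈ L, ψ a p * φ b p := by
    simp_rw [mul_sum]
    rw [sum_comm]
    exact sum_congr rfl fun b _ => sum_congr rfl fun p _ => by ring
  rw [sum_eq_zero fun p hp => by rw [hc p hp, mul_zero],
    sum_eq_single_of_mem a ha fun b hb hba => by rw [horth a ha b hb hba.symm, mul_zero]] at h
  exact (mul_eq_zero.mp h.symm).resolve_right (hdiag a ha)

theorem existsUnique_of_linearIndependent_of_card_eq {α β K : Type*} [Field K]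
    (s : Finset α) (t : Finset β) (g : α → β → K) (hcard : #s = #t)
    (hind : ∀ c : α → K, (∀ i ∈ t, ∑ a ∈ s, c a * g a i = 0) → ∀ a ∈ s, c a = 0)
    (f : β → K) :
    ∃! c : α → K, (∀ a ∉ s, c a = 0) ∧ ∀ i ∈ t, ∑ a ∈ s, c a * g a i = f i := by
  classical
  let extend (v : s → K) (a : α) : K := if h : a ∈ s then v ⟨a, h⟩ else 0
  let T := (Matrix.of fun (i : t) (a : s) => g a i).mulVecLin
  have hT (v : s → K) (i : t) : T v i = ∑ a ∈ s, extend v a * g a i := by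
    rw [← sum_coe_sort s]
    simp [T, extend, Matrix.mulVec, dotProduct, mul_comm]
  have hinj : Function.Injective T := by
    rw [← LinearMap.ker_eq_bot, LinearMap.ker_eq_bot']
    intro v hv
    funext a
    simpa [extend] using hind (extend v) (fun i hi => by rw [← hT v ⟨i, hi⟩, hv]; rfl) a a.2
  have hsurj : Function.Surjective T :=
    (LinearMap.injective_iff_surjective_of_finrank_eq_finrank (by simpa using hcard)).mp hinj
  obtain ⟨v, hv⟩ := hsurj fun i => f i
  refine ⟨extend v, ⟨fun a ha => dif_neg ha, fun i hi => by rw [← hT v ⟨i, hi⟩, hv]⟩, ?_⟩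
  rintro d ⟨hd_out, hd⟩
  have hzero := hind (fun a => d a - extend v a) fun i hi => by
    simp_rw [sub_mul, sum_sub_distrib, hd i hi, ← hT v ⟨i, hi⟩, hv, sub_self]
  funext a
  by_cases ha : a ∈ s
  · exact sub_eq_zero.mp (hzero a ha)
  · simp [extend, hd_out a ha, ha]

/-! ### Characters of the checkerboard -/

noncomputable def gridChar (m : ℕ) (a : ℤ) (j : ℕ) : ℂ := cexp (π * I * a * j / m)

theorem gridChar_add (m : ℕ) (a b : ℤ) (j : ℕ) :
    gridChar m (a + b) j = gridChar m a j * gridChar m b j := by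
  rw [gridChar, gridChar, gridChar, ← Complex.exp_add]
  push_cast
  ring_nf

theorem gridChar_add_self {m : ℕ} (hm : m ≠ 0) (a : ℤ) (j : ℕ) :
    gridChar m (a + m) j = (-1) ^ j * gridChar m a j := by
  have : (m : ℂ) ≠ 0 := by exact_mod_cast hm
  rw [gridChar, gridChar, ← Complex.exp_pi_mul_I, ← Complex.exp_nat_mul, ← Complex.exp_add]
  push_cast
  field_simp
  ring_nf

theorem gridChar_eq_pow (m : ℕ) (a : ℤ) (j : ℕ) : gridChar m a j = gridChar m a 1 ^ j := by
  rw [gridChar, gridChar, ← Complex.exp_nat_mul]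
  ring_nf

theorem gridChar_one_eq_zpow (m : ℕ) (a : ℤ) :
    gridChar m a 1 = cexp (2 * π * I / (2 * m : ℕ)) ^ a := by
  rw [gridChar, ← Complex.exp_int_mul]
  push_cast
  ring_nf

theorem sum_range_gridChar {m : ℕ} (hm : 0 < m) (a : ℤ) :
    ∑ j ∈ range (2 * m), gridChar m a j = if 2 * (m : ℤ) ∣ a then (2 * m : ℂ) else 0 := by
  have hζ := Complex.isPrimitiveRoot_exp (2 * m) (by omega)
  have hroot : gridChar m a 1 ^ (2 * m) = 1 := by
    rw [gridChar_one_eq_zpow, ← zpow_natCast, ← zpow_mul, mul_comm a, zpow_mul, zpow_natCast,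
      hζ.pow_eq_one, one_zpow]
  rw [sum_congr rfl fun j _ => gridChar_eq_pow m a j]
  split_ifs with h
  · rw [gridChar_one_eq_zpow, hζ.zpow_eq_one_iff_dvd _ |>.mpr (by exact_mod_cast h)]
    simp only [one_pow, sum_const, card_range, nsmul_eq_mul, mul_one]
    push_cast
    ring
  · refine (geom_sum_eq (fun h1 => h ?_) _).trans (by rw [hroot, sub_self, zero_div])
    rw [gridChar_one_eq_zpow, hζ.zpow_eq_one_iff_dvd] at h1
    exact_mod_cast h1

def checkerboard (m1 m2 : ℕ) : Finset (ℕ × ℕ) :=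
  (range (2 * m1) ×ˢ range (2 * m2)).filter fun p => Even (p.1 + p.2)

noncomputable def gridChar₂ (m1 m2 : ℕ) (a b : ℤ) (p : ℕ × ℕ) : ℂ :=
  gridChar m1 a p.1 * gridChar m2 b p.2

abbrev IsAliased (m1 m2 : ℕ) (a b : ℤ) : Prop :=
  (2 * (m1 : ℤ) ∣ a ∧ 2 * (m2 : ℤ) ∣ b) ∨ (2 * (m1 : ℤ) ∣ a + m1 ∧ 2 * (m2 : ℤ) ∣ b + m2)

theorem gridChar₂_mul (m1 m2 : ℕ) (a b c d : ℤ) (p : ℕ × ℕ) :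
    gridChar₂ m1 m2 a b p * gridChar₂ m1 m2 c d p = gridChar₂ m1 m2 (a + c) (b + d) p := by
  simp only [gridChar₂, gridChar_add]
  ring

theorem sum_product_range_gridChar₂ {m1 m2 : ℕ} (hm1 : 0 < m1) (hm2 : 0 < m2) (a b : ℤ) :
    ∑ p ∈ range (2 * m1) ×ˢ range (2 * m2), gridChar₂ m1 m2 a b p =
      if 2 * (m1 : ℤ) ∣ a ∧ 2 * (m2 : ℤ) ∣ b then (4 * m1 * m2 : ℂ) else 0 := by
  simp only [sum_product, gridChar₂]
  rw [← sum_mul_sum, sum_range_gridChar hm1, sum_range_gridChar hm2,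
    ite_zero_mul_ite_zero]
  ring_nf

theorem sum_checkerboard_gridChar₂ {m1 m2 : ℕ} (hm1 : 0 < m1) (hm2 : 0 < m2) (a b : ℤ) :
    ∑ p ∈ checkerboard m1 m2, gridChar₂ m1 m2 a b p =
      if IsAliased m1 m2 a b then (2 * m1 * m2 : ℂ) else 0 := by
  -- averaging with the shift by `(m1, m2)` kills exactly the odd points of the full grid
  have hshift (p : ℕ × ℕ) : gridChar₂ m1 m2 a b p + gridChar₂ m1 m2 (a + m1) (b + m2) p =
      if Even (p.1 + p.2) then 2 * gridChar₂ m1 m2 a b p else 0 := by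
    rw [gridChar₂, gridChar₂, gridChar_add_self hm1.ne', gridChar_add_self hm2.ne']
    split_ifs with h
    · rw [← mul_mul_mul_comm, ← pow_add, h.neg_one_pow]; ring
    · rw [← mul_mul_mul_comm, ← pow_add, (Nat.not_even_iff_odd.mp h).neg_one_pow]; ring
  have hdouble : 2 * ∑ p ∈ checkerboard m1 m2, gridChar₂ m1 m2 a b p =
      (if 2 * (m1 : ℤ) ∣ a ∧ 2 * (m2 : ℤ) ∣ b then (4 * m1 * m2 : ℂ) else 0) +
      (if 2 * (m1 : ℤ) ∣ a + m1 ∧ 2 * (m2 : ℤ) ∣ b + m2 then (4 * m1 * m2 : ℂ) else 0) := by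
    rw [← sum_product_range_gridChar₂ hm1 hm2, ← sum_product_range_gridChar₂ hm1 hm2,
      ← sum_add_distrib, sum_congr rfl fun p _ => hshift p, ← sum_filter, checkerboard, mul_sum]
  have hexcl : ¬ (2 * (m1 : ℤ) ∣ a ∧ 2 * (m1 : ℤ) ∣ a + m1) := fun ⟨h, h'⟩ => by
    have := Int.le_of_dvd (by omega) ((Int.dvd_add_right h).mp h')
    omega
  split_ifs at hdouble ⊢ <;> first | linear_combination hdouble / 2 | tauto

theorem Xbasis_eq_exp (γ : ℤ × ℤ) (θ φ : ℝ) :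
    Xbasis γ θ φ = (cexp (γ.1 * θ * I) + (-1) ^ γ.2 * cexp (-(γ.1 * θ) * I)) / 2 *
      cexp (I * γ.2 * φ) := by
  rw [Xbasis]
  split_ifs with h
  · rw [h.neg_one_zpow, one_mul, ← Complex.two_cos]
    push_cast
    ring
  · rw [(Int.not_even_iff_odd.mp h).neg_one_zpow, Complex.ofReal_sin]
    have h2 := Complex.two_sin (γ.1 * θ)
    push_cast at h2 ⊢
    linear_combination (I * cexp (I * γ.2 * φ) / 2) * h2 +
      (cexp (I * γ.2 * φ) * (cexp (-(γ.1 * θ) * I) - cexp (γ.1 * θ * I)) / 2) * Complex.I_sq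

theorem Xbasis_eq_gridChar₂ (m1 m2 : ℕ) (γ : ℤ × ℤ) (p : ℕ × ℕ) :
    Xbasis γ (p.1 * π / m1) (p.2 * π / m2) =
      (gridChar₂ m1 m2 γ.1 γ.2 p + (-1) ^ γ.2 * gridChar₂ m1 m2 (-γ.1) γ.2 p) / 2 := by
  rw [Xbasis_eq_exp, gridChar₂, gridChar₂, gridChar, gridChar, gridChar]
  push_cast
  ring_nf

theorem sum_checkerboard_gridChar₂_mul_Xbasis {m1 m2 : ℕ} (hm1 : 0 < m1) (hm2 : 0 < m2)
    (γ γ' : ℤ × ℤ) :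
    ∑ p ∈ checkerboard m1 m2, gridChar₂ m1 m2 (-γ.1) (-γ.2) p *
        Xbasis γ' (p.1 * π / m1) (p.2 * π / m2) =
      m1 * m2 * ((if IsAliased m1 m2 (-γ.1 + γ'.1) (-γ.2 + γ'.2) then 1 else 0) +
        (-1) ^ γ'.2 * if IsAliased m1 m2 (-γ.1 + -γ'.1) (-γ.2 + γ'.2) then 1 else 0) := by
  simp_rw [Xbasis_eq_gridChar₂, mul_div_assoc', mul_add, mul_left_comm _ ((-1 : ℂ) ^ γ'.2),
    gridChar₂_mul, ← sum_div, sum_add_distrib, ← mul_sum, sum_checkerboard_gridChar₂ hm1 hm2]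
  split_ifs <;> ring

/-! ### Biorthogonality on `Γ(m)` -/

theorem Int.eq_zero_or_eq_of_dvd {d x : ℤ} (h : d ∣ x) (h0 : 0 ≤ x) (hd : x ≤ d) :
    x = 0 ∨ x = d :=
  (eq_or_lt_of_le hd).imp_right (fun hlt => Int.eq_zero_of_dvd_of_nonneg_of_lt h0 hlt h) |>.symm

theorem mem_GammaSet_iff {m1 m2 : ℕ} {x y : ℤ} :
    (x, y) ∈ GammaSet m1 m2 ↔ (0 ≤ x ∧ x ≤ m1) ∧ (-(m2 : ℤ) ≤ y ∧ y ≤ m2) ∧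
      ((1 ≤ x ∧ (m2 : ℤ) * x + m1 * |y| ≤ m1 * m2) ∨ (x = 0 ∧ Even y ∧ |y| < m2)) ∧
      ¬((m2 : ℤ) * x + m1 * y = m1 * m2 ∧ y ≠ 0) := by
  simp only [GammaSet, mem_filter, mem_product, mem_Icc, and_assoc]

theorem bounds_of_mem_GammaSet {m1 m2 : ℕ} (hm1 : 0 < m1) (hm2 : 0 < m2) {γ : ℤ × ℤ}
    (h : γ ∈ GammaSet m1 m2) :
    (0 ≤ γ.1 ∧ γ.1 ≤ m1) ∧ (-(m2 : ℤ) < γ.2 ∧ γ.2 < m2) ∧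
      ((m2 : ℤ) * γ.1 + m1 * γ.2 ≤ m1 * m2 ∧ (m2 : ℤ) * γ.1 - m1 * γ.2 ≤ m1 * m2) ∧
      (γ.1 = 0 → Even γ.2) ∧ (γ.1 = m1 → γ.2 = 0) ∧
      ((m2 : ℤ) * γ.1 + m1 * γ.2 = m1 * m2 → γ.2 = 0) := by
  obtain ⟨⟨h0, h1⟩, -, hrow, hbdry⟩ := mem_GammaSet_iff (x := γ.1) (y := γ.2) |>.mp h
  have hm1' : (0 : ℤ) < m1 := by exact_mod_cast hm1
  have hm2' : (0 : ℤ) < m2 := by exact_mod_cast hm2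
  have hboundary (he : (m2 : ℤ) * γ.1 + m1 * γ.2 = m1 * m2) : γ.2 = 0 := by
    by_contra hne
    exact hbdry ⟨he, hne⟩
  rcases hrow with ⟨hx1, hw⟩ | ⟨hx0, hev, hlt⟩
  · have hle := le_abs_self γ.2
    have hge := neg_abs_le γ.2
    have habs : |γ.2| < m2 := by nlinarith
    refine ⟨⟨h0, h1⟩, abs_lt.mp habs, ⟨by nlinarith, by nlinarith⟩, by omega, fun hx => ?_,
      hboundary⟩
    rw [hx] at hw
    have : |γ.2| ≤ 0 := by nlinarith
    exact abs_nonpos_iff.mp this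
  · obtain ⟨hlo, hhi⟩ := abs_lt.mp hlt
    refine ⟨⟨h0, h1⟩, ⟨hlo, hhi⟩, ⟨by rw [hx0]; nlinarith, by rw [hx0]; nlinarith⟩,
      fun _ => hev, by omega, hboundary⟩

theorem eq_of_isAliased_sub {m1 m2 : ℕ} (hm1 : 0 < m1) (hm2 : 0 < m2) {γ γ' : ℤ × ℤ}
    (hγ : γ ∈ GammaSet m1 m2) (hγ' : γ' ∈ GammaSet m1 m2)
    (h : IsAliased m1 m2 (-γ.1 + γ'.1) (-γ.2 + γ'.2)) : γ = γ' := by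
  obtain ⟨⟨h0, h1⟩, ⟨hlo, hhi⟩, -, -, htop, -⟩ := bounds_of_mem_GammaSet hm1 hm2 hγ
  obtain ⟨⟨h0', h1'⟩, ⟨hlo', hhi'⟩, -, -, htop', -⟩ := bounds_of_mem_GammaSet hm1 hm2 hγ'
  rcases h with ⟨ha, hb⟩ | ⟨ha, hb⟩
  · have ha0 := Int.eq_zero_of_abs_lt_dvd ha (abs_lt.mpr ⟨by omega, by omega⟩)
    have hb0 := Int.eq_zero_of_abs_lt_dvd hb (abs_lt.mpr ⟨by omega, by omega⟩)
    exact Prod.ext (by omega) (by omega)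
  · -- the first coordinates are `0` and `m1`, so one of the second coordinates vanishes
    exfalso
    rcases Int.eq_zero_or_eq_of_dvd ha (by omega) (by omega) with ha' | ha'
    · have := Int.eq_zero_of_dvd_of_nonneg_of_lt (by omega) (by omega) hb
      have := htop (by omega)
      omega
    · have := Int.eq_zero_of_dvd_of_nonneg_of_lt (by omega) (by omega) hb
      have := htop' (by omega)
      omega

theorem eq_and_even_of_isAliased_add {m1 m2 : ℕ} (hm1 : 0 < m1) (hm2 : 0 < m2) {γ γ' : ℤ × ℤ}
    (hγ : γ ∈ GammaSet m1 m2) (hγ' : γ' ∈ GammaSet m1 m2)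
    (h : IsAliased m1 m2 (-γ.1 + -γ'.1) (-γ.2 + γ'.2)) : γ = γ' ∧ Even γ.2 := by
  obtain ⟨⟨h0, h1⟩, ⟨hlo, hhi⟩, ⟨hwp, hwm⟩, hbot, htop, hbdry⟩ := bounds_of_mem_GammaSet hm1 hm2 hγ
  obtain ⟨⟨h0', h1'⟩, ⟨hlo', hhi'⟩, ⟨hwp', hwm'⟩, -, htop', hbdry'⟩ :=
    bounds_of_mem_GammaSet hm1 hm2 hγ'
  rcases h with ⟨ha, hb⟩ | ⟨ha, hb⟩
  · have hb0 := Int.eq_zero_of_abs_lt_dvd hb (abs_lt.mpr ⟨by omega, by omega⟩)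
    rcases Int.eq_zero_or_eq_of_dvd (dvd_neg.mpr ha) (by omega) (by omega) with ha' | ha'
    · exact ⟨Prod.ext (by omega) (by omega), hbot (by omega)⟩
    · exact ⟨Prod.ext (by omega) (by omega), by rw [htop (by omega)]; exact Even.zero⟩
  · -- `γ.1 + γ'.1 = m1` and `γ'.2 - γ.2 = ± m2` put the point with positive second coordinate
    -- on the excluded edge
    exfalso
    have ha0 := Int.eq_zero_of_abs_lt_dvd ha (abs_lt.mpr ⟨by omega, by omega⟩)
    have hsum : (m2 : ℤ) * γ.1 + m2 * γ'.1 = m1 * m2 := by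
      rw [← mul_add, show γ.1 + γ'.1 = m1 by omega, mul_comm]
    rcases lt_or_ge (-γ.2 + γ'.2) 0 with hneg | hnonneg
    · have := Int.eq_zero_of_abs_lt_dvd hb (abs_lt.mpr ⟨by omega, by omega⟩)
      have hdiff : (m1 : ℤ) * γ.2 - m1 * γ'.2 = m1 * m2 := by
        rw [← mul_sub, show γ.2 - γ'.2 = m2 by omega]
      have := hbdry (by linarith)
      omega
    · have hb' : 2 * (m2 : ℤ) ∣ -γ.2 + γ'.2 - m2 := by
        have := dvd_sub hb (dvd_refl (2 * (m2 : ℤ)))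
        rwa [show -γ.2 + γ'.2 + (m2 : ℤ) - 2 * m2 = -γ.2 + γ'.2 - m2 by ring] at this
      have := Int.eq_zero_of_abs_lt_dvd hb' (abs_lt.mpr ⟨by omega, by omega⟩)
      have hdiff : (m1 : ℤ) * γ'.2 - m1 * γ.2 = m1 * m2 := by
        rw [← mul_sub, show γ'.2 - γ.2 = m2 by omega]
      have := hbdry' (by linarith)
      omega

theorem sum_checkerboard_gridChar₂_mul_Xbasis_of_ne {m1 m2 : ℕ} (hm1 : 0 < m1) (hm2 : 0 < m2)
    {γ γ' : ℤ × ℤ} (hγ : γ ∈ GammaSet m1 m2) (hγ' : γ' ∈ GammaSet m1 m2) (hne : γ ≠ γ') :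
    ∑ p ∈ checkerboard m1 m2, gridChar₂ m1 m2 (-γ.1) (-γ.2) p *
      Xbasis γ' (p.1 * π / m1) (p.2 * π / m2) = 0 := by
  rw [sum_checkerboard_gridChar₂_mul_Xbasis hm1 hm2,
    if_neg fun h => hne (eq_of_isAliased_sub hm1 hm2 hγ hγ' h),
    if_neg fun h => hne (eq_and_even_of_isAliased_add hm1 hm2 hγ hγ' h).1]
  ring

theorem sum_checkerboard_gridChar₂_mul_Xbasis_self_ne_zero {m1 m2 : ℕ} (hm1 : 0 < m1)
    (hm2 : 0 < m2) {γ : ℤ × ℤ} (hγ : γ ∈ GammaSet m1 m2) :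
    ∑ p ∈ checkerboard m1 m2, gridChar₂ m1 m2 (-γ.1) (-γ.2) p *
      Xbasis γ (p.1 * π / m1) (p.2 * π / m2) ≠ 0 := by
  have hm : (m1 * m2 : ℂ) ≠ 0 := mul_ne_zero (by exact_mod_cast hm1.ne') (by exact_mod_cast hm2.ne')
  rw [sum_checkerboard_gridChar₂_mul_Xbasis hm1 hm2, neg_add_cancel, neg_add_cancel,
    if_pos (Or.inl ⟨dvd_zero _, dvd_zero _⟩)]
  split_ifs with h
  · rw [(eq_and_even_of_isAliased_add hm1 hm2 hγ hγ (by rwa [neg_add_cancel])).2.neg_one_zpow]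
    norm_num [hm]
  · simpa using hm

/-! ### Folding the checkerboard onto `I(m)` -/

theorem cexp_I_mul_int_mul_pi (n : ℤ) : cexp (I * n * π) = (-1) ^ n := by
  rw [← Complex.exp_pi_mul_I, ← Complex.exp_int_mul]
  ring_nf

theorem Xbasis_neg_add_pi (γ : ℤ × ℤ) (θ φ : ℝ) : Xbasis γ (-θ) (φ + π) = Xbasis γ θ φ := by
  have hφ : cexp (I * γ.2 * ((φ + π : ℝ) : ℂ)) = (-1) ^ γ.2 * cexp (I * γ.2 * φ) := by
    rw [← cexp_I_mul_int_mul_pi, ← Complex.exp_add]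
    push_cast
    ring_nf
  rw [Xbasis, Xbasis, hφ, mul_neg, Real.cos_neg, Real.sin_neg]
  split_ifs with h
  · rw [h.neg_one_zpow, one_mul]
  · rw [(Int.not_even_iff_odd.mp h).neg_one_zpow]
    push_cast
    ring

theorem Xbasis_add_int_mul_two_pi (γ : ℤ × ℤ) (θ φ : ℝ) (a b : ℤ) :
    Xbasis γ (θ + a * (2 * π)) (φ + b * (2 * π)) = Xbasis γ θ φ := by
  have hθ : (γ.1 : ℝ) * (θ + a * (2 * π)) = γ.1 * θ + ((γ.1 * a : ℤ) : ℝ) * (2 * π) := by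
    push_cast
    ring
  have hφ : cexp (I * γ.2 * ((φ + b * (2 * π) : ℝ) : ℂ)) = cexp (I * γ.2 * φ) := by
    rw [← mul_one (cexp (I * γ.2 * φ)), ← Complex.exp_int_mul_two_pi_mul_I (γ.2 * b),
      ← Complex.exp_add]
    push_cast
    ring_nf
  rw [Xbasis, Xbasis, hθ, hφ, Real.cos_add_int_mul_two_pi, Real.sin_add_int_mul_two_pi]

theorem mem_indexSet_or_exists_reflection {m1 m2 : ℕ} (heven : Even m2) {p : ℕ × ℕ}
    (hp : p ∈ checkerboard m1 m2) :
    p ∈ indexSet m1 m2 ∨ ∃ q ∈ indexSet m1 m2, ∃ a b : ℤ,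
      (q.1 : ℤ) = -p.1 + a * (2 * m1) ∧ (q.2 : ℤ) = p.2 + m2 + b * (2 * m2) := by
  obtain ⟨k, rfl⟩ := heven
  obtain ⟨x, y⟩ := p
  simp only [checkerboard, indexSet, mem_filter, mem_product, mem_range, Nat.even_iff] at hp ⊢
  by_cases hI : x < m1 + 1 ∧ ((x = 0 ∨ x = m1) → y < k + k)
  · exact Or.inl ⟨⟨hI.1, hp.1.2⟩, hI.2, hp.2⟩
  right
  rcases Nat.lt_or_ge m1 x with hx | hx
  · rcases Nat.lt_or_ge y (k + k) with hy | hy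
    · exact ⟨(2 * m1 - x, y + (k + k)), by omega, 1, 0, by push_cast; omega, by push_cast; omega⟩
    · exact ⟨(2 * m1 - x, y - (k + k)), by omega, 1, -1, by push_cast; omega, by push_cast; omega⟩
  · rcases Nat.eq_zero_or_pos x with h0 | h0
    · exact ⟨(0, y - (k + k)), by omega, 0, -1, by push_cast; omega, by push_cast; omega⟩
    · exact ⟨(m1, y - (k + k)), by omega, 1, -1, by push_cast; omega, by push_cast; omega⟩

theorem exists_mem_indexSet_Xbasis_eq {m1 m2 : ℕ} (hm1 : 0 < m1) (hm2 : 0 < m2) (heven : Even m2)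
    {p : ℕ × ℕ} (hp : p ∈ checkerboard m1 m2) :
    ∃ q ∈ indexSet m1 m2, ∀ γ : ℤ × ℤ,
      Xbasis γ (p.1 * π / m1) (p.2 * π / m2) = Xbasis γ (q.1 * π / m1) (q.2 * π / m2) := by
  rcases mem_indexSet_or_exists_reflection heven hp with hpI | ⟨q, hq, a, b, hq1, hq2⟩
  · exact ⟨p, hpI, fun _ => rfl⟩
  refine ⟨q, hq, fun γ => ?_⟩
  have hq1' : (q.1 : ℝ) = -p.1 + a * (2 * m1) := by exact_mod_cast hq1
  have hq2' : (q.2 : ℝ) = p.2 + m2 + b * (2 * m2) := by exact_mod_cast hq2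
  have hm1' : (m1 : ℝ) ≠ 0 := by exact_mod_cast hm1.ne'
  have hm2' : (m2 : ℝ) ≠ 0 := by exact_mod_cast hm2.ne'
  rw [← Xbasis_neg_add_pi, ← Xbasis_add_int_mul_two_pi _ _ _ a b, hq1', hq2']
  congr 1 <;> field_simp

/-! ### Counting `I(m)` and `Γ(m)` -/

theorem card_filter_even_add_range (a n : ℕ) : #{b ∈ range (2 * n) | Even (a + b)} = n := by
  have : {b ∈ range (2 * n) | Even (a + b)} = (range n).image fun j => 2 * j + a % 2 := by
    ext b
    simp only [mem_filter, mem_range, mem_image, Nat.even_iff]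
    constructor
    · exact fun ⟨hb, hpar⟩ => ⟨b / 2, by omega, by omega⟩
    · rintro ⟨j, hj, rfl⟩
      omega
  rw [this, card_image_of_injective _ fun i j h => by omega, card_range]

theorem card_indexSet {m1 m2 : ℕ} (hm1 : 0 < m1) (heven : Even m2) :
    #(indexSet m1 m2) = m1 * m2 := by
  obtain ⟨k, rfl⟩ := heven
  obtain ⟨n, rfl⟩ : ∃ n, m1 = n + 1 := ⟨m1 - 1, by omega⟩
  have hcol (x : ℕ) : #{y ∈ range (2 * (k + k)) | ((x = 0 ∨ x = n + 1) → y < k + k) ∧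
      Even (x + y)} = if x = 0 ∨ x = n + 1 then k else k + k := by
    split_ifs with hx
    · refine Eq.trans (congrArg card ?_) (card_filter_even_add_range x k)
      ext y
      simp only [mem_filter, mem_range, Nat.even_iff]
      omega
    · simpa only [hx, false_implies, true_and] using card_filter_even_add_range x (k + k)
  rw [indexSet, card_filter, sum_product]
  simp_rw [← card_filter, hcol]
  rw [sum_range_succ, sum_range_succ']
  simp only [add_eq_zero, one_ne_zero, and_false, add_left_inj, false_or, if_true, or_true]
  rw [sum_congr rfl fun x hx => if_neg (mem_range.mp hx).ne, if_pos (Or.inl trivial), sum_const,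
    card_range, smul_eq_mul]
  ring

theorem Int.ediv_add_sub_one_ediv_add_one {m n K K' : ℤ} (hm : 0 < m) (h : K + K' = m * n) :
    K / m + (K' - 1) / m + 1 = n := by
  have hK := Int.mul_ediv_add_emod K m
  have h0 := Int.emod_nonneg K hm.ne'
  have h1 := Int.emod_lt_of_pos K hm
  have : K' - 1 = (m - 1 - K % m) + (n - K / m - 1) * m := by linear_combination h + hK
  rw [this, Int.add_mul_ediv_right _ _ hm.ne',
    Int.ediv_eq_zero_of_lt (a := m - 1 - K % m) (by omega) (by omega)]
  ring

noncomputable def gammaRow (m1 m2 : ℕ) (x : ℤ) : Finset ℤ :=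
  ({γ ∈ GammaSet m1 m2 | γ.1 = x}).image Prod.snd

theorem mem_gammaRow {m1 m2 : ℕ} {x y : ℤ} : y ∈ gammaRow m1 m2 x ↔ (x, y) ∈ GammaSet m1 m2 := by
  simp only [gammaRow, mem_image, mem_filter]
  constructor
  · rintro ⟨γ, ⟨hγ, rfl⟩, rfl⟩
    exact hγ
  · exact fun h => ⟨(x, y), ⟨h, rfl⟩, rfl⟩

theorem card_GammaSet_eq_sum_card_gammaRow (m1 m2 : ℕ) :
    #(GammaSet m1 m2) = ∑ x ∈ Icc 0 (m1 : ℤ), #(gammaRow m1 m2 x) := by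
  rw [card_eq_sum_card_fiberwise (f := Prod.fst) (t := Icc 0 (m1 : ℤ))
    fun γ hγ => mem_Icc.mpr (mem_GammaSet_iff (x := γ.1) (y := γ.2) |>.mp hγ).1]
  refine sum_congr rfl fun x _ => (card_image_of_injOn fun a ha b hb h => ?_).symm
  exact Prod.ext ((mem_filter.mp ha).2.trans (mem_filter.mp hb).2.symm) h

theorem card_gammaRow_zero {m1 m2 : ℕ} (hm1 : 0 < m1) (hm2 : 0 < m2) (heven : Even m2) :
    (#(gammaRow m1 m2 0) : ℤ) = m2 - 1 := by
  obtain ⟨k, rfl⟩ := heven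
  have hm1' : (0 : ℤ) < m1 := by exact_mod_cast hm1
  have : gammaRow m1 (k + k) 0 = (Ioo (-(k : ℤ)) k).image fun j => j + j := by
    ext y
    simp only [mem_gammaRow, mem_GammaSet_iff, le_refl, Int.reduceLE, Nat.cast_nonneg, and_self,
      mul_zero, zero_add, false_and, false_or, true_and, abs_lt, mem_image, mem_Ioo]
    constructor
    · rintro ⟨-, ⟨⟨j, rfl⟩, hlo, hhi⟩, -⟩
      exact ⟨j, ⟨by omega, by omega⟩, rfl⟩
    · rintro ⟨j, ⟨hlo, hhi⟩, rfl⟩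
      refine ⟨⟨by omega, by omega⟩, ⟨⟨j, rfl⟩, by omega, by omega⟩, fun ⟨h, _⟩ => ?_⟩
      have := mul_left_cancel₀ hm1'.ne' h
      omega
  rw [this, card_image_of_injective _ fun i j h => by omega, Int.card_Ioo]
  omega

theorem gammaRow_self {m1 m2 : ℕ} (hm1 : 0 < m1) : gammaRow m1 m2 m1 = {0} := by
  have hm1' : (0 : ℤ) < m1 := by exact_mod_cast hm1
  ext y
  simp only [mem_gammaRow, mem_GammaSet_iff, mem_singleton]
  constructor
  · rintro ⟨-, -, (⟨-, h⟩ | ⟨h, -⟩), -⟩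
    · have : |y| ≤ 0 := by nlinarith
      exact abs_nonpos_iff.mp this
    · omega
  · rintro rfl
    exact ⟨⟨by omega, le_rfl⟩, ⟨by omega, by omega⟩, Or.inl ⟨by omega, by simp [mul_comm]⟩,
      fun ⟨_, h⟩ => h rfl⟩

theorem gammaRow_eq_Icc {m1 m2 : ℕ} (hm1 : 0 < m1) (hm2 : 0 < m2) {x : ℤ}
    (hx : x ∈ Ioo 0 (m1 : ℤ)) :
    gammaRow m1 m2 x = Icc (-(m2 * (m1 - x) / m1)) ((m2 * (m1 - x) - 1) / m1) := by
  obtain ⟨hx0, hx1⟩ := mem_Ioo.mp hx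
  have hm1' : (0 : ℤ) < m1 := by exact_mod_cast hm1
  have hm2' : (0 : ℤ) < m2 := by exact_mod_cast hm2
  have hK : 0 < (m2 : ℤ) * (m1 - x) := mul_pos hm2' (by omega)
  ext y
  rw [mem_gammaRow, mem_GammaSet_iff, mem_Icc, neg_le (a := _ / _), Int.le_ediv_iff_mul_le hm1',
    Int.le_ediv_iff_mul_le hm1']
  have hy := le_abs_self y
  have hy' := neg_abs_le y
  constructor
  · rintro ⟨-, -, ⟨-, hw⟩ | ⟨h0, -⟩, hbdry⟩
    · refine ⟨by nlinarith, ?_⟩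
      by_contra hlt
      exact hbdry ⟨by nlinarith, fun h => by subst h; linarith⟩
    · omega
  · rintro ⟨hlo, hhi⟩
    have habs : (m1 : ℤ) * |y| ≤ m2 * (m1 - x) := by
      rcases abs_cases y with ⟨h, -⟩ | ⟨h, -⟩ <;> rw [h] <;> linarith
    exact ⟨⟨by omega, by omega⟩, ⟨by nlinarith, by nlinarith⟩, Or.inl ⟨by omega, by linarith⟩,
      fun ⟨h, _⟩ => by linarith⟩

theorem sum_card_gammaRow_Ioo {m1 m2 : ℕ} (hm1 : 0 < m1) (hm2 : 0 < m2) :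
    ∑ x ∈ Ioo 0 (m1 : ℤ), (#(gammaRow m1 m2 x) : ℤ) = (m1 - 1) * m2 := by
  have hm1' : (0 : ℤ) < m1 := by exact_mod_cast hm1
  have hcard (x : ℤ) (hx : x ∈ Ioo 0 (m1 : ℤ)) : (#(gammaRow m1 m2 x) : ℤ) =
      m2 * (m1 - x) / m1 + (m2 * (m1 - x) - 1) / m1 + 1 := by
    obtain ⟨hx0, hx1⟩ := mem_Ioo.mp hx
    have hK : 0 < (m2 : ℤ) * (m1 - x) := mul_pos (by exact_mod_cast hm2) (by omega)
    have h0 := Int.ediv_nonneg hK.le hm1'.le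
    have h1 := Int.ediv_nonneg (by omega : 0 ≤ (m2 : ℤ) * (m1 - x) - 1) hm1'.le
    rw [gammaRow_eq_Icc hm1 hm2 hx, Int.card_Icc, Int.toNat_of_nonneg (by omega)]
    ring
  -- reflecting `x ↦ m1 - x` pairs the two halves of each row into `m2` points
  have hreflect : ∑ x ∈ Ioo 0 (m1 : ℤ), ((m2 : ℤ) * (m1 - x) - 1) / m1 =
      ∑ x ∈ Ioo 0 (m1 : ℤ), ((m2 : ℤ) * x - 1) / m1 :=
    sum_nbij' (m1 - ·) (m1 - ·) (fun x hx => by simp only [mem_Ioo] at hx ⊢; omega)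
      (fun x hx => by simp only [mem_Ioo] at hx ⊢; omega) (fun x _ => by ring) (fun x _ => by ring)
      fun _ _ => rfl
  rw [sum_congr rfl hcard, sum_add_distrib, sum_add_distrib, hreflect, ← sum_add_distrib,
    ← sum_add_distrib, sum_congr rfl fun x _ => Int.ediv_add_sub_one_ediv_add_one hm1' (by ring),
    sum_const, Int.card_Ioo, nsmul_eq_mul, Int.toNat_of_nonneg (by omega)]
  ring

theorem card_GammaSet {m1 m2 : ℕ} (hm1 : 0 < m1) (hm2 : 0 < m2) (heven : Even m2) :
    #(GammaSet m1 m2) = m1 * m2 := by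
  have hsplit : Icc 0 (m1 : ℤ) = insert 0 (insert (m1 : ℤ) (Ioo 0 (m1 : ℤ))) := by
    ext x
    simp only [mem_insert, mem_Icc, mem_Ioo]
    omega
  zify
  rw [card_GammaSet_eq_sum_card_gammaRow, hsplit, Nat.cast_sum,
    sum_insert (by simp only [mem_insert, mem_Ioo]; omega), sum_insert (by simp),
    card_gammaRow_zero hm1 hm2 heven, gammaRow_self hm1, card_singleton,
    sum_card_gammaRow_Ioo hm1 hm2]
  ring

/-- Unique solvability of the interpolation problem in the span of
the basis functions X_γ, γ ∈ Γ(m). -/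
theorem stmt15 (m1 m2 : ℕ) (hm1 : 0 < m1) (hm2 : 0 < m2) (heven : Even m2)
    (f : ℕ × ℕ → ℂ) :
    ∃! c : ℤ × ℤ → ℂ, (∀ γ ∉ GammaSet m1 m2, c γ = 0) ∧
      ∀ i ∈ indexSet m1 m2,
        (∑ γ ∈ GammaSet m1 m2, c γ * Xbasis γ (i.1 * π / m1) (i.2 * π / m2)) =
          f i := by
  refine existsUnique_of_linearIndependent_of_card_eq _ _ _
    ((card_GammaSet hm1 hm2 heven).trans (card_indexSet hm1 heven).symm) (fun c hc => ?_) f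
  refine eq_zero_of_biorthogonal _ (checkerboard m1 m2)
    (fun γ p => Xbasis γ (p.1 * π / m1) (p.2 * π / m2)) (fun γ p => gridChar₂ m1 m2 (-γ.1) (-γ.2) p)
    (fun γ hγ γ' hγ' hne => sum_checkerboard_gridChar₂_mul_Xbasis_of_ne hm1 hm2 hγ hγ' hne)
    (fun γ hγ => sum_checkerboard_gridChar₂_mul_Xbasis_self_ne_zero hm1 hm2 hγ) c fun p hp => ?_
  obtain ⟨q, hq, hX⟩ := exists_mem_indexSet_Xbasis_eq hm1 hm2 heven hp
  simpa only [hX] using hc q hq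
end

section
/- For every γ = (γ1,γ2) ∈ ℤ², the integral (1/(4π)) ∫₀^{2π} ∫₀^{π} X_γ(θ,φ) sin θ dθ dφ equals 1/(1 − γ1²) if γ2 = 0 and γ1 is even, and equals 0 otherwise. -/
/-!
The integrand separates as `X_γ(θ, 0) sin θ · e^{iγ₂φ}`, so the double integral is a product.
The `φ`-integral of `e^{iγ₂φ}` over a full period vanishes unless `γ₂ = 0`, and then
`X_γ(θ, 0) = cos(γ₁θ)`. Writing `cos(nθ) sin θ = (sin((1 - n)θ) + sin((1 + n)θ)) / 2` and using
`∫₀^π sin(mθ) dθ = (1 - (-1)^m) / m`, the `θ`-integral is `2 / (1 - n²)` for even `n` and `0`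
for odd `n`; the uniform formula avoids treating `n = ±1` separately.
-/

open Real Complex MeasureTheory intervalIntegral

-- At `c = 0` both sides vanish, the right-hand side because `x / 0 = 0`.
theorem integral_sin_mul_zero_pi (c : ℝ) :
    ∫ θ in (0:ℝ)..π, Real.sin (c * θ) = (1 - Real.cos (c * π)) / c := by
  rcases eq_or_ne c 0 with rfl | hc
  · simp
  · rw [integral_comp_mul_left _ hc, integral_sin, mul_zero, Real.cos_zero, smul_eq_mul,
      inv_mul_eq_div]

theorem integral_sin_int_mul_zero_pi (m : ℤ) :
    ∫ θ in (0:ℝ)..π, Real.sin (m * θ) = if Even m then 0 else 2 / (m : ℝ) := by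
  rw [integral_sin_mul_zero_pi, Real.cos_int_mul_pi]
  split_ifs with hm
  · rw [hm.neg_one_zpow, sub_self, zero_div]
  · rw [(Int.not_even_iff_odd.mp hm).neg_one_zpow]
    norm_num

theorem integral_cos_int_mul_mul_sin_zero_pi (n : ℤ) :
    ∫ θ in (0:ℝ)..π, Real.cos (n * θ) * Real.sin θ
      = if Even n then 2 / (1 - (n : ℝ) ^ 2) else 0 := by
  have hprod : ∀ θ : ℝ, Real.cos (n * θ) * Real.sin θ
      = (Real.sin (((1 - n : ℤ) : ℝ) * θ) + Real.sin (((1 + n : ℤ) : ℝ) * θ)) / 2 := by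
    intro θ
    push_cast
    rw [sub_mul, add_mul, one_mul, ← two_mul_sin_mul_cos]
    ring
  simp_rw [hprod]
  rw [intervalIntegral.integral_div, intervalIntegral.integral_add
    (Continuous.intervalIntegrable (by fun_prop) _ _)
    (Continuous.intervalIntegrable (by fun_prop) _ _),
    integral_sin_int_mul_zero_pi, integral_sin_int_mul_zero_pi]
  by_cases hn : Even n
  · have h1 : ¬Even (1 - n) := by simp [Int.even_sub, hn]
    have h2 : ¬Even (1 + n) := by simp [Int.even_add, hn]
    have hn1 : ((1 - n : ℤ) : ℝ) ≠ 0 := Int.cast_ne_zero.mpr fun h => h1 (h ▸ Even.zero)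
    have hn2 : ((1 + n : ℤ) : ℝ) ≠ 0 := Int.cast_ne_zero.mpr fun h => h2 (h ▸ Even.zero)
    rw [if_neg h1, if_neg h2, if_pos hn, show (1 : ℝ) - n ^ 2 = (1 - n) * (1 + n) by ring]
    push_cast at hn1 hn2 ⊢
    field_simp
    ring
  · have h1 : Even (1 - n) := by simpa [Int.even_sub] using hn
    have h2 : Even (1 + n) := by simpa [Int.even_add] using hn
    simp [h1, h2, hn]

theorem integral_exp_int_mul_I_zero_two_pi (k : ℤ) :
    ∫ φ in (0:ℝ)..(2 * π), Complex.exp (I * k * φ) = if k = 0 then (2 * π : ℂ) else 0 := by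
  split_ifs with hk
  · simp [hk]
  · have hc : I * k ≠ 0 := mul_ne_zero I_ne_zero (Int.cast_ne_zero.mpr hk)
    rw [integral_exp_mul_complex hc, ofReal_zero, mul_zero, Complex.exp_zero, ofReal_mul,
      ofReal_ofNat, show I * k * (2 * π) = k * (2 * π * I) by ring, exp_int_mul_two_pi_mul_I,
      sub_self, zero_div]

theorem Xbasis_eq_mul_exp (γ : ℤ × ℤ) (θ φ : ℝ) :
    Xbasis γ θ φ = Xbasis γ θ 0 * Complex.exp (I * γ.2 * φ) := by
  unfold Xbasis
  split_ifs <;> simp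

theorem stmt17 (γ : ℤ × ℤ) :
    (1 / (4 * (π : ℂ))) *
      (∫ φ in (0:ℝ)..(2 * π), ∫ θ in (0:ℝ)..π, Xbasis γ θ φ * (Real.sin θ : ℂ)) =
      if γ.2 = 0 ∧ Even γ.1 then 1 / (1 - (γ.1 : ℂ) ^ 2) else 0 := by
  -- `u` is kept opaque: unfolded, `hsep` would rewrite its own right-hand side forever.
  obtain ⟨u, hu⟩ : ∃ u : ℝ → ℂ, u = fun θ => Xbasis γ θ 0 * Real.sin θ := ⟨_, rfl⟩
  have hsep : ∀ θ φ : ℝ, Xbasis γ θ φ * (Real.sin θ : ℂ) = u θ * Complex.exp (I * γ.2 * φ) :=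
    fun θ φ => by rw [hu, Xbasis_eq_mul_exp γ θ φ]; ring
  simp_rw [hsep, intervalIntegral.integral_mul_const, intervalIntegral.integral_const_mul,
    integral_exp_int_mul_I_zero_two_pi]
  rcases eq_or_ne γ.2 0 with h2 | h2
  · have hX : ∀ θ : ℝ, Xbasis γ θ 0 = Real.cos (γ.1 * θ) := by
      simp [Xbasis, h2]
    simp_rw [hu, hX, ← ofReal_mul, intervalIntegral.integral_ofReal,
      integral_cos_int_mul_mul_sin_zero_pi, h2, true_and, if_true]
    split_ifs
    · push_cast
      field_simp
      ring
    · simp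
  · simp [h2]
end

section
/- Let m1, m2 be positive integers with m2 even. For a function f : I(m) → ℂ, extend f to g on J(m) = {i ∈ ℤ² : 0 ≤ i1 ≤ 2m1−1, 0 ≤ i2 ≤ 2m2−1} by g(i) = f(i)/(2m1m2) if i ∈ I(m), g(i) = f(i*)/(2m1m2) if i* ∈ I(m) where i* = (2m1 − i1 mod 2m1, i2 + m2 mod 2m2), and g(i) = 0 otherwise. Then the discrete Fourier transform ĝ(γ) = Σ_{i∈J(m)} g(i) e^{−iγ1 i1 π/m1} e^{−iγ2 i2 π/m2} satisfies, for every γ ∈ Γ(m): the coefficient c_γ(f) := ⟨f,χ_γ⟩/‖χ_γ‖² equals ĝ(γ) if γ1 ∈ {0, m1} and equals 2ĝ(γ) if γ1 ∉ {0, m1}. -/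
open Real Complex

/-- The full grid J(m). -/
def Jgrid (m1 m2 : ℕ) : Finset (ℕ × ℕ) :=
  Finset.range (2 * m1) ×ˢ Finset.range (2 * m2)

/-- The flip operator i ↦ i* on J(m). -/
def flip' (m1 m2 : ℕ) (i : ℕ × ℕ) : ℕ × ℕ :=
  ((2 * m1 - i.1) % (2 * m1), (i.2 + m2) % (2 * m2))

/-- The discretized parity-modified Fourier basis functions χ_γ. -/
noncomputable def chi (m1 m2 : ℕ) (γ : ℤ × ℤ) (i : ℕ × ℕ) : ℂ :=
  if Even γ.2 then
    (Real.cos ((γ.1 : ℝ) * i.1 * π / m1) : ℂ) *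
      Complex.exp (Complex.I * γ.2 * i.2 * (π : ℂ) / m2)
  else
    Complex.I * (Real.sin ((γ.1 : ℝ) * i.1 * π / m1) : ℂ) *
      Complex.exp (Complex.I * γ.2 * i.2 * (π : ℂ) / m2)

/-- The discrete inner product on functions on I(m). -/
noncomputable def discInner (m1 m2 : ℕ) (f h : ℕ × ℕ → ℂ) : ℂ :=
  (1 / (m1 * m2 : ℂ)) * ∑ i ∈ indexSet m1 m2, f i * (starRingEnd ℂ) (h i)

/-- The extension g of f to the whole grid J(m). -/
noncomputable def gext (m1 m2 : ℕ) (f : ℕ × ℕ → ℂ) (i : ℕ × ℕ) : ℂ :=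
  (1 / (2 * m1 * m2 : ℂ)) *
    (if i ∈ indexSet m1 m2 then f i
     else if flip' m1 m2 i ∈ indexSet m1 m2 then f (flip' m1 m2 i) else 0)

/-- The discrete Fourier transform of g on J(m). -/
noncomputable def ghat (m1 m2 : ℕ) (f : ℕ × ℕ → ℂ) (γ : ℤ × ℤ) : ℂ :=
  ∑ i ∈ Jgrid m1 m2, gext m1 m2 f i *
    Complex.exp (-Complex.I * γ.1 * i.1 * (π : ℂ) / m1) *
    Complex.exp (-Complex.I * γ.2 * i.2 * (π : ℂ) / m2)

/- ### Auxiliary lemmas -/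

lemma stmt19_exp_mod (a : ℤ) (m n : ℕ) (hm : 0 < m) :
    Complex.exp (-Complex.I * a * ((n % (2*m) : ℕ)) * (π:ℂ) / m) =
    Complex.exp (-Complex.I * a * n * (π:ℂ) / m) := by
  have hm' : (m : ℂ) ≠ 0 := by exact_mod_cast hm.ne'
  obtain ⟨q, r, hqr, hr⟩ : ∃ q r : ℕ, n = 2*m*q + r ∧ n % (2*m) = r :=
    ⟨n / (2*m), n % (2*m), (Nat.div_add_mod n (2*m)).symm, rfl⟩
  have key : (-Complex.I * a * n * (π:ℂ) / m) =
      (-Complex.I * a * ((n % (2*m) : ℕ)) * (π:ℂ) / m) + ((-(a * q) : ℤ) : ℂ) * (2*π*Complex.I) := by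
    rw [hr, hqr]; push_cast; field_simp; ring
  rw [key, Complex.exp_add, Complex.exp_int_mul_two_pi_mul_I, mul_one]

lemma stmt19_flip_exp1 (m1 : ℕ) (hm1 : 0 < m1) (a : ℤ) (i1 : ℕ) (h : i1 ≤ 2*m1) :
    Complex.exp (-Complex.I * a * (((2*m1 - i1) % (2*m1) : ℕ)) * (π:ℂ) / m1) =
    Complex.exp (Complex.I * a * i1 * (π:ℂ) / m1) := by
  have hm' : (m1 : ℂ) ≠ 0 := by exact_mod_cast hm1.ne'
  rw [stmt19_exp_mod a m1 _ hm1]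
  have key : (-Complex.I * a * ((2*m1 - i1 : ℕ) : ℂ) * (π:ℂ) / m1) =
      (Complex.I * a * i1 * (π:ℂ) / m1) + ((-a : ℤ) : ℂ) * (2*π*Complex.I) := by
    have : ((2*m1 - i1 : ℕ) : ℂ) = 2*(m1:ℂ) - i1 := by
      push_cast [Nat.cast_sub h]; ring
    rw [this]; push_cast; field_simp; ring
  rw [key, Complex.exp_add, Complex.exp_int_mul_two_pi_mul_I, mul_one]

lemma stmt19_exp_neg_pi_I (b : ℤ) : Complex.exp (-(Complex.I * b * (π:ℂ))) =
    (if Even b then 1 else -1) := by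
  rcases Int.even_or_odd b with hb | ⟨k, hk⟩
  · obtain ⟨k, hk⟩ := hb
    rw [if_pos ⟨k, hk⟩]
    have : -(Complex.I * b * (π:ℂ)) = ((-k : ℤ) : ℂ) * (2*π*Complex.I) := by
      rw [hk]; push_cast; ring
    rw [this, Complex.exp_int_mul_two_pi_mul_I]
  · rw [if_neg (by simp [hk, Int.even_add_one, parity_simps])]
    have : -(Complex.I * b * (π:ℂ)) = ((-k - 1: ℤ) : ℂ) * (2*π*Complex.I) + (π * Complex.I) := by
      rw [hk]; push_cast; ring
    rw [this, Complex.exp_add, Complex.exp_int_mul_two_pi_mul_I, one_mul, Complex.exp_pi_mul_I]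

lemma stmt19_flip_exp2 (m2 : ℕ) (hm2 : 0 < m2) (b : ℤ) (i2 : ℕ) :
    Complex.exp (-Complex.I * b * (((i2 + m2) % (2*m2) : ℕ)) * (π:ℂ) / m2) =
    (if Even b then 1 else -1) * Complex.exp (-Complex.I * b * i2 * (π:ℂ) / m2) := by
  have hm' : (m2 : ℂ) ≠ 0 := by exact_mod_cast hm2.ne'
  rw [stmt19_exp_mod b m2 _ hm2]
  have key : (-Complex.I * b * ((i2 + m2 : ℕ) : ℂ) * (π:ℂ) / m2) =
      -(Complex.I * b * (π:ℂ)) + (-Complex.I * b * i2 * (π:ℂ) / m2) := by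
    push_cast; field_simp; ring
  rw [key, Complex.exp_add, stmt19_exp_neg_pi_I]

lemma stmt19_mem_indexSet {m1 m2 : ℕ} {i : ℕ × ℕ} :
    i ∈ indexSet m1 m2 ↔ i.1 ≤ m1 ∧ i.2 < 2*m2 ∧ ((i.1 = 0 ∨ i.1 = m1) → i.2 < m2) ∧ Even (i.1 + i.2) := by
  simp [indexSet, Finset.mem_filter, Finset.mem_product, Nat.lt_succ_iff, and_assoc]

lemma stmt19_mem_Jgrid {m1 m2 : ℕ} {i : ℕ × ℕ} :
    i ∈ Jgrid m1 m2 ↔ i.1 < 2*m1 ∧ i.2 < 2*m2 := by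
  simp [Jgrid, Finset.mem_product]

lemma stmt19_indexSet_subset_Jgrid {m1 m2 : ℕ} (hm1 : 0 < m1) :
    indexSet m1 m2 ⊆ Jgrid m1 m2 := by
  intro i hi
  rw [stmt19_mem_indexSet] at hi
  rw [stmt19_mem_Jgrid]
  omega

lemma stmt19_flip_mem_Jgrid {m1 m2 : ℕ} (hm1 : 0 < m1) (hm2 : 0 < m2) (i : ℕ × ℕ) :
    flip' m1 m2 i ∈ Jgrid m1 m2 := by
  rw [stmt19_mem_Jgrid]
  exact ⟨Nat.mod_lt _ (by omega), Nat.mod_lt _ (by omega)⟩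

lemma stmt19_flip_flip {m1 m2 : ℕ} (hm1 : 0 < m1) (hm2 : 0 < m2) {i : ℕ × ℕ}
    (hi : i ∈ Jgrid m1 m2) : flip' m1 m2 (flip' m1 m2 i) = i := by
  rw [stmt19_mem_Jgrid] at hi
  obtain ⟨h1, h2⟩ := hi
  unfold flip'
  ext
  · show (2*m1 - (2*m1 - i.1) % (2*m1)) % (2*m1) = i.1
    rcases Nat.eq_zero_or_pos i.1 with h | h
    · simp [h, Nat.mod_self]
    · have e1 : (2*m1 - i.1) % (2*m1) = 2*m1 - i.1 := Nat.mod_eq_of_lt (by omega)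
      rw [e1, Nat.mod_eq_of_lt (show 2*m1 - (2*m1 - i.1) < 2*m1 by omega)]
      omega
  · show ((i.2 + m2) % (2*m2) + m2) % (2*m2) = i.2
    rw [Nat.mod_add_mod]
    have : i.2 + m2 + m2 = i.2 + 2*m2 := by ring
    rw [this, Nat.add_mod_right, Nat.mod_eq_of_lt h2]

lemma stmt19_flip_not_mem {m1 m2 : ℕ} (hm1 : 0 < m1) (hm2 : 0 < m2) {i : ℕ × ℕ}
    (hi : i ∈ indexSet m1 m2) : flip' m1 m2 i ∉ indexSet m1 m2 := by
  rw [stmt19_mem_indexSet] at hi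
  obtain ⟨h1, h2, h3, _⟩ := hi
  intro hmem
  rw [stmt19_mem_indexSet] at hmem
  obtain ⟨g1, g2, g3, _⟩ := hmem
  unfold flip' at g1 g3
  simp only at g1 g3
  rcases Nat.eq_zero_or_pos i.1 with h | h
  · have e1 : (2*m1 - i.1) % (2*m1) = 0 := by rw [h]; simp [Nat.mod_self]
    have hlt : i.2 < m2 := h3 (Or.inl h)
    have e2 : (i.2 + m2) % (2*m2) = i.2 + m2 := Nat.mod_eq_of_lt (by omega)
    rw [e1, e2] at g3
    have := g3 (Or.inl rfl)
    omega
  · have e1 : (2*m1 - i.1) % (2*m1) = 2*m1 - i.1 := Nat.mod_eq_of_lt (by omega)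
    rcases Nat.lt_or_ge i.1 m1 with h' | h'
    · rw [e1] at g1; omega
    · have hi1 : i.1 = m1 := by omega
      have hlt : i.2 < m2 := h3 (Or.inr hi1)
      have e2 : (i.2 + m2) % (2*m2) = i.2 + m2 := Nat.mod_eq_of_lt (by omega)
      rw [e1, e2] at g3
      have := g3 (Or.inr (by omega))
      omega

lemma stmt19_conj_chi (m1 m2 : ℕ) (γ : ℤ × ℤ) (i : ℕ × ℕ) :
    (starRingEnd ℂ) (chi m1 m2 γ i) =
      (Complex.exp (-Complex.I * γ.1 * i.1 * (π:ℂ) / m1) +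
        (if Even γ.2 then 1 else -1) * Complex.exp (Complex.I * γ.1 * i.1 * (π:ℂ) / m1)) / 2 *
      Complex.exp (-Complex.I * γ.2 * i.2 * (π:ℂ) / m2) := by
  have hcast : (((γ.1 : ℝ) * i.1 * π / m1 : ℝ) : ℂ) = (γ.1:ℂ) * i.1 * (π:ℂ) / m1 := by
    push_cast; ring
  have hconjexp : (starRingEnd ℂ) (Complex.exp (Complex.I * γ.2 * i.2 * (π:ℂ) / m2)) =
      Complex.exp (-Complex.I * γ.2 * i.2 * (π:ℂ) / m2) := by
    rw [← Complex.exp_conj]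
    congr 1
    simp [map_div₀, Complex.conj_I]
  unfold chi
  split_ifs with h
  all_goals {
    first
    | rw [map_mul, Complex.conj_ofReal, hconjexp, Complex.ofReal_cos, hcast, Complex.cos]
    | rw [map_mul, map_mul, Complex.conj_I, Complex.conj_ofReal, hconjexp,
        Complex.ofReal_sin, hcast, Complex.sin]
    rw [show ((γ.1:ℂ) * i.1 * (π:ℂ) / m1) * Complex.I = Complex.I * γ.1 * i.1 * (π:ℂ) / m1 from by ring,
      show -((γ.1:ℂ) * i.1 * (π:ℂ) / m1) * Complex.I = -Complex.I * γ.1 * i.1 * (π:ℂ) / m1 from by ring]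
    ring_nf
    try rw [Complex.I_sq]
    try ring }

theorem stmt19 (m1 m2 : ℕ) (hm1 : 0 < m1) (hm2 : 0 < m2) (heven : Even m2)
    (f : ℕ × ℕ → ℂ) (γ : ℤ × ℤ) (hγ : γ ∈ GammaSet m1 m2) :
    discInner m1 m2 f (chi m1 m2 γ) /
        (if γ.1 = 0 ∨ γ.1 = (m1 : ℤ) then 1 else 1 / 2) =
      if γ.1 = 0 ∨ γ.1 = (m1 : ℤ) then ghat m1 m2 f γ
      else 2 * ghat m1 m2 f γ := by
  suffices hmain : discInner m1 m2 f (chi m1 m2 γ) = ghat m1 m2 f γ by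
    split_ifs with h
    · rw [hmain, div_one]
    · rw [hmain]; ring
  set S := indexSet m1 m2 with hS
  -- the flip exponential identity on S
  have hEflip : ∀ i ∈ S,
      Complex.exp (-Complex.I * γ.1 * ((flip' m1 m2 i).1 : ℂ) * (π:ℂ) / m1) *
        Complex.exp (-Complex.I * γ.2 * ((flip' m1 m2 i).2 : ℂ) * (π:ℂ) / m2) =
      (if Even γ.2 then 1 else -1) *
        (Complex.exp (Complex.I * γ.1 * i.1 * (π:ℂ) / m1) *
          Complex.exp (-Complex.I * γ.2 * i.2 * (π:ℂ) / m2)) := by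
    intro i hi
    rw [stmt19_mem_indexSet] at hi
    show Complex.exp (-Complex.I * γ.1 * (((2*m1 - i.1) % (2*m1) : ℕ) : ℂ) * (π:ℂ) / m1) *
        Complex.exp (-Complex.I * γ.2 * (((i.2 + m2) % (2*m2) : ℕ) : ℂ) * (π:ℂ) / m2) = _
    rw [stmt19_flip_exp1 m1 hm1 γ.1 i.1 (by omega), stmt19_flip_exp2 m2 hm2 γ.2 i.2]
    ring
  -- rewrite ghat as a sum over S of two terms
  have hsub : S ∪ S.image (flip' m1 m2) ⊆ Jgrid m1 m2 := by
    intro i hi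
    rcases Finset.mem_union.1 hi with h | h
    · exact stmt19_indexSet_subset_Jgrid hm1 h
    · obtain ⟨j, hj, rfl⟩ := Finset.mem_image.1 h
      exact stmt19_flip_mem_Jgrid hm1 hm2 j
  have hdisj : Disjoint S (S.image (flip' m1 m2)) := by
    rw [Finset.disjoint_left]
    intro a ha hb
    obtain ⟨j, hj, rfl⟩ := Finset.mem_image.1 hb
    exact stmt19_flip_not_mem hm1 hm2 hj ha
  have hghat : ghat m1 m2 f γ = ∑ i ∈ S ∪ S.image (flip' m1 m2), gext m1 m2 f i *
      Complex.exp (-Complex.I * γ.1 * i.1 * (π:ℂ) / m1) *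
      Complex.exp (-Complex.I * γ.2 * i.2 * (π:ℂ) / m2) := by
    rw [ghat]
    refine (Finset.sum_subset hsub ?_).symm
    intro i hiJ hni
    have h1 : i ∉ S := fun h => hni (Finset.mem_union_left _ h)
    have h2 : flip' m1 m2 i ∉ S := by
      intro h
      exact hni (Finset.mem_union_right _ (Finset.mem_image.2
        ⟨flip' m1 m2 i, h, stmt19_flip_flip hm1 hm2 hiJ⟩))
    rw [gext, if_neg h1, if_neg h2]
    ring
  rw [hghat, Finset.sum_union hdisj,
    Finset.sum_image (fun x hx y hy hxy => by
      rw [← stmt19_flip_flip hm1 hm2 (stmt19_indexSet_subset_Jgrid hm1 hx), hxy,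
        stmt19_flip_flip hm1 hm2 (stmt19_indexSet_subset_Jgrid hm1 hy)])]
  rw [discInner, Finset.mul_sum, ← Finset.sum_add_distrib]
  refine Finset.sum_congr rfl ?_
  intro i hi
  have hflipval : gext m1 m2 f (flip' m1 m2 i) = (1 / (2 * m1 * m2 : ℂ)) * f i := by
    rw [gext, if_neg (stmt19_flip_not_mem hm1 hm2 hi),
      if_pos (by rw [stmt19_flip_flip hm1 hm2 (stmt19_indexSet_subset_Jgrid hm1 hi)]; exact hi),
      stmt19_flip_flip hm1 hm2 (stmt19_indexSet_subset_Jgrid hm1 hi)]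
  rw [gext, if_pos hi, hflipval, stmt19_conj_chi]
  have := hEflip i hi
  set s : ℂ := (if Even γ.2 then 1 else -1) with hs
  set A := Complex.exp (-Complex.I * γ.1 * i.1 * (π:ℂ) / m1) with hA
  set B := Complex.exp (Complex.I * γ.1 * i.1 * (π:ℂ) / m1) with hB
  set C := Complex.exp (-Complex.I * γ.2 * i.2 * (π:ℂ) / m2) with hC
  set A' := Complex.exp (-Complex.I * γ.1 * ((flip' m1 m2 i).1 : ℂ) * (π:ℂ) / m1) with hA'
  set C' := Complex.exp (-Complex.I * γ.2 * ((flip' m1 m2 i).2 : ℂ) * (π:ℂ) / m2) with hC'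
  -- this : A' * C' = s * (B * C)
  calc 1 / (↑m1 * ↑m2) * (f i * ((A + s * B) / 2 * C))
      = 1 / (2 * ↑m1 * ↑m2) * f i * A * C + 1 / (2 * ↑m1 * ↑m2) * f i * (s * (B * C)) := by ring
    _ = 1 / (2 * ↑m1 * ↑m2) * f i * A * C + 1 / (2 * ↑m1 * ↑m2) * f i * (A' * C') := by rw [this]
    _ = 1 / (2 * ↑m1 * ↑m2) * f i * A * C + 1 / (2 * ↑m1 * ↑m2) * f i * A' * C' := by ring
end
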